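/- arXiv:0910.2429 — 6 statements merged into one kernel-verified Lean document; each statement's English description precedes it below -/
import Mathlib

section
/- In a Bruck loop, every right inner mapping R_{x,y} = R_x R_y R_{xy}^{-1} is an automorphism of the loop. -/
/-- A loop: a set with multiplication and two-sided identity in which all left
and right translations are bijections. -/
class LoopStr (Q : Type*) extends Mul Q, One Q where
  one_mul : ∀ x : Q, 1 * x = x
  mul_one : ∀ x : Q, x * 1 = x
  bijL : ∀ a : Q, Function.Bijective fun x : Q => a * x
  bijR : ∀ a : Q, Function.Bijective fun x : Q => x * a

/-- Right translation `R_a : x ↦ x * a` as a permutation. -/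
noncomputable def Rt {Q : Type*} [LoopStr Q] (a : Q) : Equiv.Perm Q :=
  Equiv.ofBijective (fun x : Q => x * a) (LoopStr.bijR a)

/-- Left translation `L_a : x ↦ a * x` as a permutation. -/
noncomputable def Lt {Q : Type*} [LoopStr Q] (a : Q) : Equiv.Perm Q :=
  Equiv.ofBijective (fun x : Q => a * x) (LoopStr.bijL a)

/-- A right Bol loop. -/
class RightBolLoop (Q : Type*) extends LoopStr Q where
  bol : ∀ x y z : Q, ((x * y) * z) * y = x * ((y * z) * y)

/-- Integer powers in a loop: `x ^ n = 1 R_x^n`. -/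
noncomputable def zp {Q : Type*} [LoopStr Q] (x : Q) (n : ℤ) : Q := ((Rt x) ^ n) 1

/-- A Bruck loop: a right Bol loop with two-sided inverses satisfying the
automorphic inverse property `(xy)⁻¹ = x⁻¹ y⁻¹`. -/
class BruckLoop (Q : Type*) extends RightBolLoop Q, Inv Q where
  mul_inv : ∀ x : Q, x * x⁻¹ = 1
  inv_mul : ∀ x : Q, x⁻¹ * x = 1
  aip : ∀ x y : Q, (x * y)⁻¹ = x⁻¹ * y⁻¹

section BruckAux

variable {Q : Type*} [BruckLoop Q]

private lemma bl_cancelR {a b : Q} (c : Q) (h : a * c = b * c) : a = b :=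
  (LoopStr.bijR c).1 h

private lemma bl_cancelL {a b : Q} (c : Q) (h : c * a = c * b) : a = b :=
  (LoopStr.bijL c).1 h

/-- Right inverse property, part 2: `(a c⁻¹) c = a`. -/
private lemma bl_rip2 (a c : Q) : (a * c⁻¹) * c = a := by
  have h := RightBolLoop.bol a c⁻¹ c
  rw [BruckLoop.inv_mul, LoopStr.one_mul] at h
  exact bl_cancelR c⁻¹ h

private lemma bl_invinv (c : Q) : c⁻¹⁻¹ = c := by
  apply bl_cancelL c⁻¹
  rw [BruckLoop.mul_inv, BruckLoop.inv_mul]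

/-- Right alternative law. -/
private lemma bl_alt (a c : Q) : (a * c) * c = a * (c * c) := by
  have h := RightBolLoop.bol a c 1
  rwa [LoopStr.mul_one, LoopStr.mul_one] at h

private lemma bl_inv_sq (c : Q) : c⁻¹ * (c * c) = c := by
  have h := RightBolLoop.bol c⁻¹ c 1
  rw [BruckLoop.inv_mul, LoopStr.mul_one, LoopStr.mul_one, LoopStr.one_mul] at h
  exact h.symm

/-- The Bruck identity `(xy)² = (y x²) y`. -/
private lemma bl_bruck (x y : Q) : (x * y) * (x * y) = (y * (x * x)) * y := by
  have h1 : (x⁻¹ * y⁻¹) * ((y * (x * x)) * y) = x * y := by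
    rw [← RightBolLoop.bol, bl_rip2 x⁻¹ y, ← bl_alt x⁻¹ x, BruckLoop.inv_mul,
      LoopStr.one_mul]
  have h2 : (x⁻¹ * y⁻¹) * ((x * y) * (x * y)) = x * y := by
    rw [← BruckLoop.aip x y, bl_inv_sq]
  exact bl_cancelL (x⁻¹ * y⁻¹) (h2.trans h1.symm)

/-- Inverse of a doubled product. -/
private lemma bl_inv3 (p q r : Q) : ((p * q) * r)⁻¹ = (p⁻¹ * q⁻¹) * r⁻¹ := by
  rw [BruckLoop.aip (p * q) r, BruckLoop.aip p q]

/-- The basic symmetry `s_c : u ↦ u⁻¹ c`. -/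
private def sQ (c u : Q) : Q := u⁻¹ * c

/-- Swap law: `s_a ∘ s_b = s_{(a b⁻¹) a} ∘ s_a`. -/
private lemma bl_swap (a b u : Q) :
    sQ a (sQ b u) = sQ ((a * b⁻¹) * a) (sQ a u) := by
  show (u⁻¹ * b)⁻¹ * a = (u⁻¹ * a)⁻¹ * ((a * b⁻¹) * a)
  rw [BruckLoop.aip u⁻¹ b, BruckLoop.aip u⁻¹ a, bl_invinv u, ← RightBolLoop.bol,
    bl_rip2 u a]

/-- `J ∘ s_c = s_{c⁻¹} ∘ J`. -/
private lemma bl_jswap (c u : Q) : (sQ c u)⁻¹ = sQ c⁻¹ u⁻¹ :=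
  BruckLoop.aip u⁻¹ c

/-- The inner map `T u = ((u x) y) (xy)⁻¹` written via the symmetries. -/
private lemma bl_T_eq (x y u : Q) :
    ((u * x) * y) * (x * y)⁻¹ = (sQ (x * y) (sQ y (sQ x⁻¹ u)))⁻¹ := by
  show ((u * x) * y) * (x * y)⁻¹ = (((u⁻¹ * x⁻¹)⁻¹ * y)⁻¹ * (x * y))⁻¹
  rw [BruckLoop.aip ((u⁻¹ * x⁻¹)⁻¹ * y)⁻¹ (x * y),
    bl_invinv ((u⁻¹ * x⁻¹)⁻¹ * y), BruckLoop.aip u⁻¹ x⁻¹, bl_invinv u, bl_invinv x]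

/-- The inner map commutes with inversion: `(T a⁻¹)⁻¹ = T a`. -/
private lemma bl_T_inv (x y a : Q) :
    (((a⁻¹ * x) * y) * (x * y)⁻¹)⁻¹ = ((a * x) * y) * (x * y)⁻¹ := by
  rw [BruckLoop.aip ((a⁻¹ * x) * y) (x * y)⁻¹, bl_invinv (x * y),
    bl_inv3 a⁻¹ x y, bl_invinv a]
  apply bl_cancelR (x * y)
  rw [bl_rip2 ((a * x) * y) (x * y), bl_alt ((a * x⁻¹) * y⁻¹) (x * y), bl_bruck x y,
    ← RightBolLoop.bol, bl_rip2 (a * x⁻¹) y, ← bl_alt (a * x⁻¹) x, bl_rip2 a x]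

/-- The conjugation parameter equals `T b`. -/
private lemma bl_c3_inv (x y b : Q) :
    (((x * y) * ((y * ((x⁻¹ * b⁻¹) * x⁻¹)⁻¹) * y)⁻¹) * (x * y))⁻¹ =
      ((b * x) * y) * (x * y)⁻¹ := by
  have hc1 : ((x⁻¹ * b⁻¹) * x⁻¹)⁻¹ = (x * b) * x := by
    rw [bl_inv3 x⁻¹ b⁻¹ x⁻¹, bl_invinv x, bl_invinv b]
  rw [bl_inv3 (x * y) ((y * ((x⁻¹ * b⁻¹) * x⁻¹)⁻¹) * y)⁻¹ (x * y),
    bl_invinv ((y * ((x⁻¹ * b⁻¹) * x⁻¹)⁻¹) * y), hc1, BruckLoop.aip x y,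
    ← RightBolLoop.bol, bl_rip2 x⁻¹ y, ← RightBolLoop.bol, BruckLoop.inv_mul x,
    LoopStr.one_mul b]

end BruckAux

/-- In a Bruck loop, every right inner mapping `R_{x,y} = R_x R_y R_{xy}⁻¹`
is an automorphism of the loop. -/
theorem bruck_rightInner_isAut {Q : Type*} [BruckLoop Q] :
    ∀ x y a b : Q,
      ((Rt (x * y))⁻¹ * Rt y * Rt x) (a * b) =
        ((Rt (x * y))⁻¹ * Rt y * Rt x) a * ((Rt (x * y))⁻¹ * Rt y * Rt x) b := by
  intro x y a b
  have key : ∀ u : Q,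
      ((Rt (x * y))⁻¹ * Rt y * Rt x) u = ((u * x) * y) * (x * y)⁻¹ := by
    intro u
    have h1 : ((Rt (x * y))⁻¹ * Rt y * Rt x) u
        = (Rt (x * y)).symm ((u * x) * y) := rfl
    rw [h1, Equiv.symm_apply_eq]
    exact (bl_rip2 ((u * x) * y) (x * y)).symm
  rw [key (a * b), key a, key b]
  have hab : a * b = sQ b a⁻¹ := by
    show a * b = a⁻¹⁻¹ * b
    rw [bl_invinv a]
  calc (((a * b) * x) * y) * (x * y)⁻¹
      = (((sQ b a⁻¹) * x) * y) * (x * y)⁻¹ := by rw [hab]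
    _ = (sQ (x * y) (sQ y (sQ x⁻¹ (sQ b a⁻¹))))⁻¹ := bl_T_eq x y _
    _ = (sQ (x * y) (sQ y (sQ ((x⁻¹ * b⁻¹) * x⁻¹) (sQ x⁻¹ a⁻¹))))⁻¹ := by
        rw [bl_swap x⁻¹ b a⁻¹]
    _ = (sQ (x * y) (sQ ((y * ((x⁻¹ * b⁻¹) * x⁻¹)⁻¹) * y) (sQ y (sQ x⁻¹ a⁻¹))))⁻¹ := by
        rw [bl_swap y ((x⁻¹ * b⁻¹) * x⁻¹) (sQ x⁻¹ a⁻¹)]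
    _ = (sQ (((x * y) * ((y * ((x⁻¹ * b⁻¹) * x⁻¹)⁻¹) * y)⁻¹) * (x * y))
          (sQ (x * y) (sQ y (sQ x⁻¹ a⁻¹))))⁻¹ := by
        rw [bl_swap (x * y) ((y * ((x⁻¹ * b⁻¹) * x⁻¹)⁻¹) * y) (sQ y (sQ x⁻¹ a⁻¹))]
    _ = sQ ((((x * y) * ((y * ((x⁻¹ * b⁻¹) * x⁻¹)⁻¹) * y)⁻¹) * (x * y))⁻¹)
          ((sQ (x * y) (sQ y (sQ x⁻¹ a⁻¹)))⁻¹) := bl_jswap _ _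
    _ = sQ ((((x * y) * ((y * ((x⁻¹ * b⁻¹) * x⁻¹)⁻¹) * y)⁻¹) * (x * y))⁻¹)
          (((a⁻¹ * x) * y) * (x * y)⁻¹) := by rw [← bl_T_eq x y a⁻¹]
    _ = (((a⁻¹ * x) * y) * (x * y)⁻¹)⁻¹ *
          ((((x * y) * ((y * ((x⁻¹ * b⁻¹) * x⁻¹)⁻¹) * y)⁻¹) * (x * y))⁻¹) := rfl
    _ = (((a * x) * y) * (x * y)⁻¹) * (((b * x) * y) * (x * y)⁻¹) := by
        rw [bl_T_inv x y a, bl_c3_inv x y b]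
end

section
/- Let G be a group and T a twisted subgroup with ⟨T⟩ = G. There exists an automorphism τ of G with τ² = 1 such that T ⊆ K(τ) = {g : g^τ = g^{-1}} if and only if the Aschbacher radical T' = { x_1 ⋯ x_n : x_i ∈ T, x_1^{-1} ⋯ x_n^{-1} = 1 } is trivial. -/
/-- A twisted subgroup of a group `G`: contains `1`, closed under inversion,
and `x T x ⊆ T` for all `x ∈ T`. -/
def IsTwistedSubgroup {G : Type*} [Group G] (T : Set G) : Prop :=
  (1 : G) ∈ T ∧ (∀ x ∈ T, x⁻¹ ∈ T) ∧ ∀ x ∈ T, ∀ y ∈ T, x * y * x ∈ T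

/-- The Aschbacher radical of a subset `T` of a group. -/
def aschRadical {G : Type*} [Group G] (T : Set G) : Set G :=
  {g : G | ∃ l : List G, (∀ x ∈ l, x ∈ T) ∧ (l.map fun x => x⁻¹).prod = 1 ∧ l.prod = g}

private lemma invprod {G : Type*} [Group G] (l : List G) :
    (l.map fun x => x⁻¹).prod = l.reverse.prod⁻¹ := by
  induction l with
  | nil => simp
  | cons x t ih => simp [ih, mul_inv_rev]

private lemma revinvprod {G : Type*} [Group G] (l : List G) :
    ((l.map fun x => x⁻¹).reverse).prod = l.prod⁻¹ := by
  induction l with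
  | nil => simp
  | cons x t ih => simp [ih, mul_inv_rev]

/-- For a twisted subgroup `T` generating `G`, there is an automorphism `τ`
with `τ² = 1` and `T ⊆ K(τ)` iff the Aschbacher radical of `T` is trivial. -/
theorem exists_involution_iff_radical_trivial {G : Type*} [Group G] (T : Set G)
    (hT : IsTwistedSubgroup T) (hgen : Subgroup.closure T = ⊤) :
    (∃ τ : MulAut G, τ ^ 2 = 1 ∧ ∀ g ∈ T, τ g = g⁻¹) ↔
      aschRadical T = {1} := by
  obtain ⟨h1T, hinvT, htw⟩ := hT
  constructor
  · rintro ⟨τ, hτ2, hτT⟩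
    ext g
    simp only [Set.mem_singleton_iff]
    constructor
    · rintro ⟨l, hl, hinv, hprod⟩
      have h1 : τ g = 1 := by
        rw [← hprod, map_list_prod, ← hinv]
        congr 1
        exact List.map_congr_left fun x hx => hτT x (hl x hx)
      have : (τ * τ) g = τ 1 := congrArg τ h1
      rw [show τ * τ = 1 from by rw [← sq]; exact hτ2] at this
      simpa using this
    · rintro rfl
      exact ⟨[], by simp, by simp, by simp⟩
  · intro hrad
    -- triviality in both directions
    have key0 : ∀ l : List G, (∀ x ∈ l, x ∈ T) → l.reverse.prod = 1 → l.prod = 1 := by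
      intro l hl h
      have hmem : l.prod ∈ aschRadical T := ⟨l, hl, by rw [invprod, h, inv_one], rfl⟩
      rw [hrad] at hmem; exact hmem
    have key1 : ∀ l : List G, (∀ x ∈ l, x ∈ T) → l.prod = 1 → l.reverse.prod = 1 := by
      intro l hl h
      have h2 := key0 (l.map fun x => x⁻¹)
        (by intro x hx; obtain ⟨y, hy, rfl⟩ := List.mem_map.mp hx; exact hinvT y (hl y hy))
        (by rw [revinvprod, h, inv_one])
      rw [invprod] at h2
      exact inv_eq_one.mp h2
    have hrep : ∀ g : G, ∃ l : List G, (∀ x ∈ l, x ∈ T) ∧ l.prod = g := by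
      intro g
      have hg : g ∈ Submonoid.closure (T ∪ T⁻¹) := by
        rw [← Subgroup.closure_toSubmonoid, hgen]; trivial
      obtain ⟨l, hl, hprod⟩ := Submonoid.exists_list_of_mem_closure hg
      refine ⟨l, fun x hx => ?_, hprod⟩
      rcases hl x hx with h | h
      · exact h
      · simpa using hinvT _ h
    choose rep hrepT hrepP using hrep
    set f : G → G := fun g => ((rep g).reverse.prod)⁻¹ with hf
    have fspec : ∀ (g : G) (l : List G), (∀ x ∈ l, x ∈ T) → l.prod = g →
        f g = (l.reverse.prod)⁻¹ := by
      intro g l hl hp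
      set m : List G := rep g ++ (l.map fun x => x⁻¹).reverse with hm
      have hmT : ∀ x ∈ m, x ∈ T := by
        intro x hx
        rcases List.mem_append.mp hx with h | h
        · exact hrepT g x h
        · obtain ⟨y, hy, rfl⟩ := List.mem_map.mp (List.mem_reverse.mp h)
          exact hinvT y (hl y hy)
      have hm1 : m.prod = 1 := by
        rw [hm, List.prod_append, hrepP, revinvprod, hp, mul_inv_cancel]
      have hm2 := key1 m hmT hm1
      rw [hm, List.reverse_append, List.prod_append, List.reverse_reverse] at hm2
      -- hm2 : (l.map inv).prod * (rep g).reverse.prod = 1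
      rw [invprod] at hm2
      have heq : l.reverse.prod = (rep g).reverse.prod := inv_mul_eq_one.mp hm2
      show (rep g).reverse.prod⁻¹ = l.reverse.prod⁻¹
      rw [heq]
    have hmul : ∀ g h : G, f (g * h) = f g * f h := by
      intro g h
      have := fspec (g * h) (rep g ++ rep h)
        (by intro x hx; rcases List.mem_append.mp hx with h' | h'
            · exact hrepT g x h'
            · exact hrepT h x h')
        (by rw [List.prod_append, hrepP, hrepP])
      rw [this, List.reverse_append, List.prod_append, mul_inv_rev]
    have hff : ∀ g : G, f (f g) = g := by
      intro g
      have h1 : f g = ((rep g).map fun x => x⁻¹).prod := by rw [hf, invprod]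
      have := fspec (f g) ((rep g).map fun x => x⁻¹)
        (by intro x hx; obtain ⟨y, hy, rfl⟩ := List.mem_map.mp hx; exact hinvT y (hrepT g y hy))
        h1.symm
      rw [this, revinvprod, inv_inv, hrepP]
    refine ⟨{ toFun := f, invFun := f, left_inv := hff, right_inv := hff,
              map_mul' := hmul }, ?_, ?_⟩
    · ext g
      exact hff g
    · intro g hg
      have := fspec g [g] (by simpa using hg) (by simp)
      simpa using this
end

section
/- Let T be a uniquely 2-divisible twisted subgroup of a group G, and define x ⊙ y = (y x² y)^{1/2} for x,y ∈ T. Then (T, ⊙) is a Bruck loop (a right Bol loop satisfying the automorphic inverse property) that is uniquely 2-divisible. -/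
/-- On a uniquely 2-divisible twisted subgroup `T` (with square-root function
`s`), the operation `x ⊙ y = (y x² y)^{1/2}` makes `T` a uniquely 2-divisible
Bruck loop. -/
theorem glauberman_halving_bruckLoop {G : Type*} [Group G] (T : Set G)
    (hT : IsTwistedSubgroup T)
    (s : G → G) (hs_mem : ∀ x ∈ T, s x ∈ T)
    (hs_sq : ∀ x ∈ T, s x * s x = x)
    (hs_uniq : ∀ x ∈ T, ∀ y ∈ T, y * y = x → y = s x)
    (o : G → G → G) (ho : ∀ x y : G, o x y = s (y * (x * x) * y)) :
    -- T is closed under ⊙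
    (∀ x ∈ T, ∀ y ∈ T, o x y ∈ T) ∧
    -- 1 is a two-sided identity
    (∀ x ∈ T, o x 1 = x ∧ o 1 x = x) ∧
    -- both divisions have unique solutions in T (loop property)
    (∀ a ∈ T, ∀ b ∈ T,
      (∃! x, x ∈ T ∧ o a x = b) ∧ (∃! y, y ∈ T ∧ o y a = b)) ∧
    -- the right Bol identity
    (∀ x ∈ T, ∀ y ∈ T, ∀ z ∈ T, o (o (o x y) z) y = o x (o (o y z) y)) ∧
    -- group inversion is loop inversion, and the automorphic inverse property
    (∀ x ∈ T, o x x⁻¹ = 1) ∧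
    (∀ x ∈ T, ∀ y ∈ T, (o x y)⁻¹ = o x⁻¹ y⁻¹) ∧
    -- the loop (T, ⊙) is uniquely 2-divisible
    (∀ x ∈ T, ∃! r, r ∈ T ∧ o r r = x) := by
  obtain ⟨h1, hinv, hclos⟩ := hT
  -- squares are in T
  have hsq : ∀ x ∈ T, x * x ∈ T := fun x hx => by simpa using hclos x hx 1 h1
  -- the conjugate-like element is in T
  have hconj : ∀ x ∈ T, ∀ y ∈ T, y * (x * x) * y ∈ T :=
    fun x hx y hy => hclos y hy (x * x) (hsq x hx)
  -- closure under o
  have homem : ∀ x ∈ T, ∀ y ∈ T, o x y ∈ T := fun x hx y hy => by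
    rw [ho]; exact hs_mem _ (hconj x hx y hy)
  -- squaring o
  have hosq : ∀ x ∈ T, ∀ y ∈ T, o x y * o x y = y * (x * x) * y := fun x hx y hy => by
    rw [ho]; exact hs_sq _ (hconj x hx y hy)
  -- injectivity of squaring on T
  have sq_inj : ∀ u ∈ T, ∀ v ∈ T, u * u = v * v → u = v := by
    intro u hu v hv h
    rw [hs_uniq (v * v) (hsq v hv) u hu h, ← hs_uniq (v * v) (hsq v hv) v hv rfl]
  refine ⟨homem, ?_, ?_, ?_, ?_, ?_, ?_⟩
  · -- identity
    intro x hx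
    constructor
    · apply sq_inj _ (homem x hx 1 h1) _ hx
      rw [hosq x hx 1 h1]; group
    · apply sq_inj _ (homem 1 h1 x hx) _ hx
      rw [hosq 1 h1 x hx]; group
  · -- divisions
    intro a ha b hb
    constructor
    · -- o a x = b : x = a⁻¹ * s (a * (b*b) * a) * a⁻¹
      have hc : s (a * (b * b) * a) ∈ T := hs_mem _ (hconj b hb a ha)
      have hc2 : s (a * (b * b) * a) * s (a * (b * b) * a) = a * (b * b) * a :=
        hs_sq _ (hconj b hb a ha)
      set c := s (a * (b * b) * a) with hcdef
      have hx0 : a⁻¹ * c * a⁻¹ ∈ T := hclos a⁻¹ (hinv a ha) c hc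
      refine ⟨a⁻¹ * c * a⁻¹, ⟨hx0, ?_⟩, ?_⟩
      · apply sq_inj _ (homem a ha _ hx0) _ hb
        rw [hosq a ha _ hx0]
        have : a⁻¹ * c * a⁻¹ * (a * a) * (a⁻¹ * c * a⁻¹) = a⁻¹ * (c * c) * a⁻¹ := by group
        rw [this, hc2]; group
      · rintro x ⟨hxT, hxe⟩
        have h2 : x * (a * a) * x = b * b := by
          rw [← hosq a ha x hxT, hxe]
        have h3 : (a * x * a) * (a * x * a) = a * (b * b) * a := by
          rw [← h2]; group
        have h4 : a * x * a = c := hs_uniq _ (hconj b hb a ha) _ (hclos a ha x hxT) h3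
        rw [← h4]; group
    · -- o y a = b : y = s (a⁻¹ * (b*b) * a⁻¹)
      have hm : a⁻¹ * (b * b) * a⁻¹ ∈ T := hconj b hb a⁻¹ (hinv a ha)
      refine ⟨s (a⁻¹ * (b * b) * a⁻¹), ⟨hs_mem _ hm, ?_⟩, ?_⟩
      · apply sq_inj _ (homem _ (hs_mem _ hm) a ha) _ hb
        rw [hosq _ (hs_mem _ hm) a ha, hs_sq _ hm]; group
      · rintro y ⟨hyT, hye⟩
        have h2 : a * (y * y) * a = b * b := by
          rw [← hosq y hyT a ha, hye]
        have h3 : y * y = a⁻¹ * (b * b) * a⁻¹ := by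
          rw [← h2]; group
        exact hs_uniq _ hm y hyT h3
  · -- right Bol
    intro x hx y hy z hz
    have hyzy : y * z * y ∈ T := hclos y hy z hz
    -- o (o y z) y = y * z * y
    have key : o (o y z) y = y * z * y := by
      apply sq_inj _ (homem _ (homem y hy z hz) y hy) _ hyzy
      rw [hosq _ (homem y hy z hz) y hy, hosq y hy z hz]; group
    have hL : o (o x y) z ∈ T := homem _ (homem x hx y hy) z hz
    rw [key]
    apply sq_inj _ (homem _ hL y hy) _ (homem x hx _ hyzy)
    rw [hosq _ hL y hy, hosq _ (homem x hx y hy) z hz, hosq x hx y hy,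
      hosq x hx _ hyzy]
    group
  · -- o x x⁻¹ = 1
    intro x hx
    apply sq_inj _ (homem x hx x⁻¹ (hinv x hx)) _ h1
    rw [hosq x hx x⁻¹ (hinv x hx)]; group
  · -- AIP
    intro x hx y hy
    apply sq_inj _ (hinv _ (homem x hx y hy)) _ (homem x⁻¹ (hinv x hx) y⁻¹ (hinv y hy))
    rw [hosq x⁻¹ (hinv x hx) y⁻¹ (hinv y hy), ← mul_inv_rev, hosq x hx y hy]
    group
  · -- unique 2-divisibility
    intro x hx
    refine ⟨s x, ⟨hs_mem x hx, ?_⟩, ?_⟩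
    · apply sq_inj _ (homem _ (hs_mem x hx) _ (hs_mem x hx)) _ hx
      rw [hosq _ (hs_mem x hx) _ (hs_mem x hx)]
      have : s x * (s x * s x) * s x = (s x * s x) * (s x * s x) := by group
      rw [this, hs_sq x hx]
    · rintro r ⟨hrT, hre⟩
      have hrr : o r r = r * r := by
        apply sq_inj _ (homem r hrT r hrT) _ (hsq r hrT)
        rw [hosq r hrT r hrT]; group
      exact hs_uniq x hx r hrT (by rw [← hrr, hre])
end

section
/- Let T be a uniquely 2-divisible twisted subgroup of a group G, and let T(1/2) = (T, ⊙) with x ⊙ y = (y x² y)^{1/2}. Then for every x ∈ T and integer n, the n-th power of x computed in the group G coincides with the n-th power of x in the loop T(1/2). In particular, x has finite order n in G if and only if it has order n in T(1/2). -/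
/-- Natural powers in a magma with unit `e`, by iterated right multiplication. -/
def lpow {G : Type*} (o : G → G → G) (e : G) (x : G) : ℕ → G
  | 0 => e
  | n + 1 => o (lpow o e x n) x

/-- Integer powers in a magma with unit `e` and inversion `inv`. -/
def lzpow {G : Type*} (o : G → G → G) (e : G) (inv : G → G) (x : G) : ℤ → G
  | Int.ofNat n => lpow o e x n
  | Int.negSucc n => lpow o e (inv x) (n + 1)

lemma twisted_pow_mem {G : Type*} [Group G] (T : Set G) (hT : IsTwistedSubgroup T)
    {x : G} (hx : x ∈ T) : ∀ n : ℕ, x ^ n ∈ T := by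
  have key : ∀ n : ℕ, x ^ n ∈ T ∧ x ^ (n + 1) ∈ T := by
    intro n
    induction n with
    | zero => exact ⟨by simpa using hT.1, by simpa using hx⟩
    | succ k ih =>
      refine ⟨ih.2, ?_⟩
      have := hT.2.2 x hx _ ih.1
      have h : x * x ^ k * x = x ^ (k + 1 + 1) := by group
      rwa [h] at this
  exact fun n => (key n).1

lemma lpow_eq_pow {G : Type*} [Group G] (T : Set G) (hT : IsTwistedSubgroup T)
    (s : G → G) (hs_mem : ∀ x ∈ T, s x ∈ T)
    (hs_sq : ∀ x ∈ T, s x * s x = x)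
    (hs_uniq : ∀ x ∈ T, ∀ y ∈ T, y * y = x → y = s x)
    (o : G → G → G) (ho : ∀ x y : G, o x y = s (y * (x * x) * y))
    {x : G} (hx : x ∈ T) : ∀ n : ℕ, lpow o 1 x n = x ^ n := by
  intro n
  induction n with
  | zero => simp [lpow]
  | succ k ih =>
    have hmem : x ^ (2 * (k + 1)) ∈ T := twisted_pow_mem T hT hx _
    have hmem' : x ^ (k + 1) ∈ T := twisted_pow_mem T hT hx _
    have hsq : x ^ (k + 1) * x ^ (k + 1) = x ^ (2 * (k + 1)) := by
      rw [← pow_add]; ring_nf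
    have := hs_uniq _ hmem _ hmem' hsq
    have harg : x * (x ^ k * x ^ k) * x = x ^ (2 * (k + 1)) := by
      rw [← pow_add]; group
    rw [lpow, ih, ho, harg, ← this]

/-- Powers of elements of a uniquely 2-divisible twisted subgroup `T` in the
loop `T(1/2)` agree with powers taken in the ambient group; in particular an
element has the same order in both structures. -/
theorem glauberman_halving_pow_eq {G : Type*} [Group G] (T : Set G)
    (hT : IsTwistedSubgroup T)
    (s : G → G) (hs_mem : ∀ x ∈ T, s x ∈ T)
    (hs_sq : ∀ x ∈ T, s x * s x = x)
    (hs_uniq : ∀ x ∈ T, ∀ y ∈ T, y * y = x → y = s x)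
    (o : G → G → G) (ho : ∀ x y : G, o x y = s (y * (x * x) * y)) :
    (∀ x ∈ T, ∀ n : ℤ, lzpow o 1 (fun g => g⁻¹) x n = x ^ n) ∧
    (∀ x ∈ T, ∀ n : ℕ, (lpow o 1 x n = 1 ↔ x ^ n = 1)) := by
  have main : ∀ x ∈ T, ∀ n : ℕ, lpow o 1 x n = x ^ n := fun x hx => lpow_eq_pow T hT s hs_mem hs_sq hs_uniq o ho hx
  constructor
  · intro x hx n
    cases n with
    | ofNat m => simpa [lzpow] using main x hx m
    | negSucc m =>
      have hinv : x⁻¹ ∈ T := hT.2.1 x hx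
      simp only [lzpow, main x⁻¹ hinv]
      rw [zpow_negSucc, ← inv_pow]
  · intro x hx n
    rw [main x hx]
end

section
/- Let T be a uniquely 2-divisible twisted subgroup of a group G, and let T(1/2) = (T, ⊙) with x ⊙ y = (y x² y)^{1/2}. If K ⊆ T is a subloop of T(1/2), then K is a twisted subgroup of G. -/
/-- A subloop `K` of the loop `T(1/2)` on a uniquely 2-divisible twisted
subgroup `T` is itself a twisted subgroup of `G`. -/
theorem subloop_isTwistedSubgroup {G : Type*} [Group G] (T : Set G)
    (hT : IsTwistedSubgroup T)
    (s : G → G) (hs_mem : ∀ x ∈ T, s x ∈ T)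
    (hs_sq : ∀ x ∈ T, s x * s x = x)
    (hs_uniq : ∀ x ∈ T, ∀ y ∈ T, y * y = x → y = s x)
    (o : G → G → G) (ho : ∀ x y : G, o x y = s (y * (x * x) * y))
    (K : Set G) (hKT : K ⊆ T)
    (hK1 : (1 : G) ∈ K)
    (hKmul : ∀ a ∈ K, ∀ b ∈ K, o a b ∈ K)
    (hKldiv : ∀ a ∈ K, ∀ b ∈ K, ∀ x ∈ T, o a x = b → x ∈ K)
    (hKrdiv : ∀ a ∈ K, ∀ b ∈ K, ∀ x ∈ T, o x a = b → x ∈ K) :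
    IsTwistedSubgroup K := by
  obtain ⟨h1, hinv, hconj⟩ := hT
  have hsq : ∀ x ∈ T, x * x ∈ T := fun x hx => by
    have := hconj x hx 1 h1; simpa using this
  have hs1 : s 1 = 1 := (hs_uniq 1 h1 1 h1 (one_mul 1)).symm
  refine ⟨hK1, ?_, ?_⟩
  · intro x hx
    have hxT := hKT hx
    have hxiT := hinv x hxT
    apply hKldiv x hx 1 hK1 x⁻¹ hxiT
    rw [ho]
    have h2 : x⁻¹ * (x * x) * x⁻¹ = 1 := by group
    rw [h2, hs1]
  · intro x hx y hy
    have hxT := hKT hx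
    have hyT := hKT hy
    have hc : o x y ∈ K := hKmul x hx y hy
    have hcsq : o x y * o x y = y * (x * x) * y := by
      rw [ho]; exact hs_sq _ (hconj y hyT (x * x) (hsq x hxT))
    have hxyx : x * y * x ∈ T := hconj x hxT y hyT
    have key : o (o x y) x = x * y * x := by
      rw [ho]
      have h2 : x * (o x y * o x y) * x = (x * y * x) * (x * y * x) := by
        rw [hcsq]; group
      rw [h2]
      exact (hs_uniq _ (hsq _ hxyx) _ hxyx rfl).symm
    have hmem := hKmul _ hc x hx
    rwa [key] at hmem
end

section
/- Let T be a Tarski monster group and let T(1/2) be the associated Bruck loop with x ⊙ y = (y x² y)^{1/2}. For every nonidentity x ∈ T, the commutant of x in T(1/2), namely {y : x ⊙ y = y ⊙ x}, equals the cyclic subgroup ⟨x⟩. -/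
/-- A Tarski monster: an infinite group in which every nontrivial proper
subgroup is cyclic of order the fixed prime `p`. -/
def IsTarskiMonster (G : Type*) [Group G] (p : ℕ) : Prop :=
  p.Prime ∧ Infinite G ∧
    ∀ H : Subgroup G, H ≠ ⊥ → H ≠ ⊤ → Nat.card H = p ∧ IsCyclic H

section TarskiAux

variable {G : Type*} [Group G] {p : ℕ}

/-- Two subgroups, the smaller of finite cardinality at least that of the larger
(finite) one, are equal. -/
private lemma tm_sub_eq_of_le {K H : Subgroup G} (hle : K ≤ H)
    (hc : Nat.card H ≤ Nat.card K) (hH : Finite H) : K = H := by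
  have hHs : (H : Set G).Finite := Set.finite_coe_iff.mpr hH
  apply SetLike.coe_injective
  apply Set.eq_of_subset_of_ncard_le (SetLike.coe_subset_coe.mpr hle) ?_ hHs
  rw [← Nat.card_coe_set_eq, ← Nat.card_coe_set_eq]
  exact hc

/-- In a Tarski monster, every nontrivial element has order `p`. -/
private lemma tm_orderOf (h : IsTarskiMonster G p) {x : G} (hx : x ≠ 1) :
    orderOf x = p := by
  obtain ⟨hp, hinf, hsub⟩ := h
  have hbot : Subgroup.zpowers x ≠ ⊥ := by
    simpa [Subgroup.zpowers_eq_bot] using hx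
  by_cases htop : Subgroup.zpowers x = ⊤
  · exfalso
    have h0 : orderOf x = 0 := by
      have h1 : Nat.card (Subgroup.zpowers x) = 0 := by
        rw [htop, Subgroup.card_top]
        exact Nat.card_eq_zero_of_infinite
      rwa [Nat.card_zpowers] at h1
    have hfo : ¬ IsOfFinOrder x := orderOf_eq_zero_iff.mp h0
    have hx2 : x * x ≠ 1 := by
      intro h1
      exact hfo (isOfFinOrder_iff_pow_eq_one.mpr ⟨2, two_pos, by rwa [pow_two]⟩)
    have hbot2 : Subgroup.zpowers (x * x) ≠ ⊥ := by
      simpa [Subgroup.zpowers_eq_bot] using hx2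
    have htop2 : Subgroup.zpowers (x * x) ≠ ⊤ := by
      intro ht
      have hxmem : x ∈ Subgroup.zpowers (x * x) := ht ▸ Subgroup.mem_top x
      obtain ⟨k, hk⟩ := Subgroup.mem_zpowers_iff.mp hxmem
      have hxx : (x * x : G) = x ^ (2 : ℤ) := by
        rw [zpow_two]
      rw [hxx, ← zpow_mul] at hk
      have hinj : Function.Injective fun n : ℤ => x ^ n :=
        injective_zpow_iff_not_isOfFinOrder.mpr hfo
      have h21 : (2 : ℤ) * k = 1 := by
        have := hinj (a₁ := 2 * k) (a₂ := 1) (by simpa using hk)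
        exact this
      omega
    have hcard := (hsub _ hbot2 htop2).1
    rw [Nat.card_zpowers] at hcard
    have hfo2 : ¬ IsOfFinOrder (x * x) := by
      intro hf
      have : IsOfFinOrder (x ^ 2) := by rwa [pow_two]
      exact hfo (this.of_pow two_ne_zero)
    rw [orderOf_eq_zero_iff.mpr hfo2] at hcard
    exact hp.ne_zero hcard.symm
  · have hcard := (hsub _ hbot htop).1
    rwa [Nat.card_zpowers] at hcard

/-- In a Tarski monster, anything commuting with a nontrivial `x` is a power
of `x`. -/
private lemma tm_mem_of_commute (h : IsTarskiMonster G p) {x y : G} (hx : x ≠ 1)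
    (hxy : Commute x y) : y ∈ Subgroup.zpowers x := by
  obtain ⟨hp, hinf, hsub⟩ := h
  by_contra hmem
  have hy : y ≠ 1 := fun h1 => hmem (h1 ▸ (Subgroup.zpowers x).one_mem)
  have hop : orderOf x = p := tm_orderOf ⟨hp, hinf, hsub⟩ hx
  have hoy : orderOf y = p := tm_orderOf ⟨hp, hinf, hsub⟩ hy
  let H : Subgroup G :=
    { carrier := {g | ∃ i j : ℤ, g = x ^ i * y ^ j}
      one_mem' := ⟨0, 0, by simp⟩
      mul_mem' := by
        rintro a b ⟨i1, j1, rfl⟩ ⟨i2, j2, rfl⟩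
        refine ⟨i1 + i2, j1 + j2, ?_⟩
        rw [zpow_add, zpow_add]
        exact (hxy.symm.zpow_zpow j1 i2).mul_mul_mul_comm (x ^ i1) (y ^ j2)
      inv_mem' := by
        rintro a ⟨i, j, rfl⟩
        refine ⟨-i, -j, ?_⟩
        rw [mul_inv_rev, zpow_neg, zpow_neg]
        exact ((hxy.zpow_zpow i j).inv_inv).eq.symm }
  have hxH : x ∈ H := ⟨1, 0, by simp⟩
  have hyH : y ∈ H := ⟨0, 1, by simp⟩
  have hfin : (H : Set G).Finite := by
    have himg : ((fun n : Fin p × Fin p => x ^ (n.1 : ℕ) * y ^ (n.2 : ℕ)) ''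
        Set.univ).Finite := Set.finite_univ.image _
    refine himg.subset ?_
    rintro g ⟨i, j, rfl⟩
    have hp0 : (0 : ℤ) < (p : ℤ) := by exact_mod_cast hp.pos
    have hi0 : 0 ≤ i % (p : ℤ) := Int.emod_nonneg i (ne_of_gt hp0)
    have hi1 : i % (p : ℤ) < (p : ℤ) := Int.emod_lt_of_pos i hp0
    have hj0 : 0 ≤ j % (p : ℤ) := Int.emod_nonneg j (ne_of_gt hp0)
    have hj1 : j % (p : ℤ) < (p : ℤ) := Int.emod_lt_of_pos j hp0
    refine ⟨(⟨(i % (p : ℤ)).toNat, by omega⟩, ⟨(j % (p : ℤ)).toNat, by omega⟩),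
      Set.mem_univ _, ?_⟩
    have e1 : x ^ ((i % (p : ℤ)).toNat) = x ^ i := by
      rw [← zpow_natCast, Int.toNat_of_nonneg hi0, ← hop, zpow_mod_orderOf]
    have e2 : y ^ ((j % (p : ℤ)).toNat) = y ^ j := by
      rw [← zpow_natCast, Int.toNat_of_nonneg hj0, ← hoy, zpow_mod_orderOf]
    simp only []
    rw [e1, e2]
  have hnet : H ≠ ⊤ := by
    intro ht
    have : (Set.univ : Set G).Finite := by
      rw [← Subgroup.coe_top (G := G), ← ht]
      exact hfin
    exact Set.infinite_univ this
  have hneb : H ≠ ⊥ := by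
    intro hb
    rw [hb, Subgroup.mem_bot] at hxH
    exact hx hxH
  have hcard : Nat.card H = p := (hsub H hneb hnet).1
  have hfinH : Finite H := Nat.finite_of_card_ne_zero (by rw [hcard]; exact hp.ne_zero)
  have hle : Subgroup.zpowers x ≤ H := Subgroup.zpowers_le.mpr hxH
  have heq : Subgroup.zpowers x = H := by
    apply tm_sub_eq_of_le hle _ hfinH
    rw [hcard, Nat.card_zpowers, hop]
  exact hmem (heq ▸ hyH)

end TarskiAux

/-- In the Bruck loop `T(1/2)` associated with a Tarski monster, the commutant
of any nonidentity element `x` is the cyclic subgroup `⟨x⟩`. -/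
theorem tarskiMonster_halving_commutant {G : Type*} [Group G] {p : ℕ}
    (h : IsTarskiMonster G p)
    (s : G → G) (hs_sq : ∀ x : G, s x * s x = x)
    (hs_uniq : ∀ x y : G, y * y = x → y = s x)
    (o : G → G → G) (ho : ∀ x y : G, o x y = s (y * (x * x) * y)) :
    ∀ x : G, x ≠ 1 → {y : G | o x y = o y x} = (Subgroup.zpowers x : Set G) := by
  intro x hx
  have hfact : Fact p.Prime := ⟨h.1⟩
  have hox : orderOf x = p := tm_orderOf h hx
  ext y
  simp only [Set.mem_setOf_eq, SetLike.mem_coe]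
  constructor
  · intro hoxy
    have key : y * (x * x) * y = x * (y * y) * x := by
      have h1 : s (y * (x * x) * y) = s (x * (y * y) * x) := by
        rw [← ho x y, ← ho y x]; exact hoxy
      calc y * (x * x) * y = s (y * (x * x) * y) * s (y * (x * x) * y) :=
            (hs_sq _).symm
        _ = s (x * (y * y) * x) * s (x * (y * y) * x) := by rw [h1]
        _ = x * (y * y) * x := hs_sq _
    have hcom : (x * y) * (y * x) = (y * x) * (x * y) := by
      calc (x * y) * (y * x) = x * (y * y) * x := by group
        _ = y * (x * x) * y := key.symm
        _ = (y * x) * (x * y) := by group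
    by_cases hz1 : x * y = 1
    · have hyx : y = x⁻¹ := eq_inv_of_mul_eq_one_right (by rw [← hz1])
      rw [hyx]
      exact Subgroup.inv_mem _ (Subgroup.mem_zpowers x)
    · have hcz : Commute (x * y) (y * x) := hcom
      have hmemw : y * x ∈ Subgroup.zpowers (x * y) :=
        tm_mem_of_commute h hz1 hcz
      obtain ⟨k, hk⟩ := Subgroup.mem_zpowers_iff.mp hmemw
      have hw : y * x = x⁻¹ * (x * y) * x := by group
      have hconj : x⁻¹ * (x * y) * x = (x * y) ^ k := by
        rw [← hw]; exact hk.symm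
      have hiter : ∀ n : ℕ, x⁻¹ ^ n * (x * y) * x ^ n = (x * y) ^ (k ^ n) := by
        intro n
        induction n with
        | zero => simp
        | succ n ih =>
          have hstep : x⁻¹ ^ (n + 1) * (x * y) * x ^ (n + 1)
              = x⁻¹ ^ n * (x⁻¹ * (x * y) * x) * x ^ n := by group
          have hc : x⁻¹ ^ n * (x * y) ^ k * x ^ n
              = (x⁻¹ ^ n * (x * y) * x ^ n) ^ k := by
            have h3 := conj_zpow (i := k) (a := (x ^ n)⁻¹) (b := x * y)
            rw [inv_inv] at h3
            rw [inv_pow]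
            exact h3.symm
          rw [hstep, hconj, hc, ih, ← zpow_mul, ← pow_succ]
      have hxp : x ^ p = 1 := by rw [← hox]; exact pow_orderOf_eq_one x
      have hzp : (x * y) ^ ((1 : ℤ)) = (x * y) ^ ((k : ℤ) ^ p) := by
        have h2 := hiter p
        rw [inv_pow, hxp] at h2
        simpa using h2
      have hoz : orderOf (x * y) = p := tm_orderOf h hz1
      have hk1 : (x * y) ^ k = (x * y) ^ (1 : ℤ) := by
        rw [zpow_eq_zpow_iff_modEq, hoz]
        have hmodp : (1 : ℤ) ≡ k ^ p [ZMOD (p : ℕ)] := by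
          rw [zpow_eq_zpow_iff_modEq, hoz] at hzp
          exact hzp
        have hcast : ((k : ZMod p)) ^ p = 1 := by
          have := (ZMod.intCast_eq_intCast_iff _ _ _).mpr hmodp
          push_cast at this
          exact this.symm
        rw [ZMod.pow_card] at hcast
        have : ((k : ZMod p)) = ((1 : ℤ) : ZMod p) := by push_cast; exact hcast
        exact (ZMod.intCast_eq_intCast_iff _ _ _).mp this
      have hfix : x⁻¹ * (x * y) * x = x * y := by
        rw [hconj, hk1, zpow_one]
      have hcxz : Commute (x * y) x := by
        have : (x * y) * x = x * (x * y) := by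
          calc (x * y) * x = x * (x⁻¹ * (x * y) * x) := by group
            _ = x * (x * y) := by rw [hfix]
        exact this
      have hxmem : x ∈ Subgroup.zpowers (x * y) := tm_mem_of_commute h hz1 hcxz
      have hle : Subgroup.zpowers x ≤ Subgroup.zpowers (x * y) :=
        Subgroup.zpowers_le.mpr hxmem
      have hfinz : Finite (Subgroup.zpowers (x * y)) := by
        apply Nat.finite_of_card_ne_zero
        rw [Nat.card_zpowers, hoz]
        exact h.1.ne_zero
      have heq : Subgroup.zpowers x = Subgroup.zpowers (x * y) := by
        apply tm_sub_eq_of_le hle _ hfinz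
        rw [Nat.card_zpowers, Nat.card_zpowers, hox, hoz]
      have hzmem : x * y ∈ Subgroup.zpowers x := by
        rw [heq]; exact Subgroup.mem_zpowers _
      have hyval : y = x⁻¹ * (x * y) := by group
      rw [hyval]
      exact mul_mem (inv_mem (Subgroup.mem_zpowers x)) hzmem
  · intro hy
    obtain ⟨k, rfl⟩ := Subgroup.mem_zpowers_iff.mp hy
    rw [ho, ho]
    congr 1
    group
end
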